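/- Let ρ ∈ (0,1), SNR > 0, δ ∈ [0,1], let N, K, i be positive integers with i ≤ K, set A = (1−ρ)/N, and let β₁ ∈ ℝ^i, β₂ ∈ ℝ^{K−i}. Then ∫_ℝ φ(μ; 0, ρ/N) ∫_ℝ ∫_{ℝ^{K−i}} ( ∏_{k=1}^{K−i} φ((x₂)_k; μ, A) ) · ( ∫_{ℝ^i} ( ∏_{k=1}^{i} φ((x₁)_k; μ, A) ) · φ( y − ⟨x₁, β₁⟩ − ⟨x₂, β₂⟩; 0, 1/SNR )^{1/(1+δ)} dx₁ )^{1+δ} dx₂ dy dμ = ( 1 + (1−ρ)·SNR·‖β₁‖² / (N(1+δ)) )^{−δ/2}. -/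

import Mathlib

/-!
A power of a Gaussian density is a multiple of a Gaussian density,
`φ(x; m, v) ^ p = (2πv) ^ ((1 - p) / 2) p ^ (-1/2) φ(x; m, v / p)`, and integrating
`φ(z - ⟨x, β⟩; m, w)` against independent coordinates `x_k ~ N(μ_k, a_k)` gives
`φ(z; m + Σ μ_k β_k, w + Σ a_k β_k²)` (completing the square, one coordinate at a time).
Working from the inside out, the `x₁`-integral, its `(1 + δ)`-th power and the `x₂`-integral
are therefore Gaussian densities in `y` up to constants, the `y`- and `μ`-integrals are `1`, and
only the constants survive.
-/

open MeasureTheory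

noncomputable section

/-- Density of the real Gaussian distribution `N(m, v)` with mean `m` and variance `v`. -/
def gauss (x m v : ℝ) : ℝ := (2 * Real.pi * v) ^ (-(1:ℝ)/2) * Real.exp (-(x - m)^2 / (2*v))

open Real

lemma gauss_eq_gaussianPDFReal {v : ℝ} (hv : 0 < v) (x m : ℝ) :
    gauss x m v = ProbabilityTheory.gaussianPDFReal m v.toNNReal x := by
  rw [ProbabilityTheory.gaussianPDFReal, coe_toNNReal v hv.le, gauss, neg_div,
    rpow_neg (by positivity), ← sqrt_eq_rpow, neg_div]

lemma gauss_nonneg {v : ℝ} (hv : 0 < v) (x m : ℝ) : 0 ≤ gauss x m v := by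
  unfold gauss; positivity

lemma gauss_le {v : ℝ} (hv : 0 < v) (x m : ℝ) : gauss x m v ≤ (2 * π * v) ^ (-(1:ℝ)/2) :=
  mul_le_of_le_one_right (by positivity) (exp_le_one_iff.2 (by
    rw [neg_div]; exact neg_nonpos.2 (by positivity)))

lemma continuous_gauss (m v : ℝ) : Continuous fun x => gauss x m v := by
  unfold gauss; fun_prop

lemma integrable_gauss {v : ℝ} (hv : 0 < v) (m : ℝ) : Integrable fun x => gauss x m v := by
  simp_rw [gauss_eq_gaussianPDFReal hv]
  exact ProbabilityTheory.integrable_gaussianPDFReal m _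

lemma integral_gauss_eq_one {v : ℝ} (hv : 0 < v) (m : ℝ) : ∫ x, gauss x m v = 1 := by
  simp_rw [gauss_eq_gaussianPDFReal hv]
  exact ProbabilityTheory.integral_gaussianPDFReal_eq_one m (toNNReal_pos.2 hv).ne'

lemma gauss_mul_gauss_sub {v₁ v₂ : ℝ} (hv₁ : 0 < v₁) (hv₂ : 0 < v₂) (m₁ m₂ c x z : ℝ) :
    gauss x m₁ v₁ * gauss (z - c * x) m₂ v₂ =
      gauss z (m₂ + c * m₁) (v₂ + c ^ 2 * v₁) *
        gauss x ((m₁ * v₂ + c * v₁ * (z - m₂)) / (v₂ + c ^ 2 * v₁))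
          (v₁ * v₂ / (v₂ + c ^ 2 * v₁)) := by
  have hV : 0 < v₂ + c ^ 2 * v₁ := by positivity
  simp only [gauss]
  rw [mul_mul_mul_comm, mul_mul_mul_comm ((2 * π * (v₂ + c ^ 2 * v₁)) ^ _), ← exp_add, ← exp_add,
    ← mul_rpow (by positivity) (by positivity), ← mul_rpow (by positivity) (by positivity)]
  congr 2
  · field_simp
  · field_simp
    ring

lemma integral_gauss_mul_gauss_sub {v₁ v₂ : ℝ} (hv₁ : 0 < v₁) (hv₂ : 0 < v₂) (m₁ m₂ c z : ℝ) :
    ∫ x, gauss x m₁ v₁ * gauss (z - c * x) m₂ v₂ = gauss z (m₂ + c * m₁) (v₂ + c ^ 2 * v₁) := by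
  simp_rw [gauss_mul_gauss_sub hv₁ hv₂]
  rw [integral_const_mul, integral_gauss_eq_one (by positivity), mul_one]

def gaussRpowConst (v p : ℝ) : ℝ := (2 * π * v) ^ ((1 - p) / 2) * p ^ (-(1:ℝ)/2)

lemma gauss_rpow {v p : ℝ} (hv : 0 < v) (hp : 0 < p) (x m : ℝ) :
    gauss x m v ^ p = gaussRpowConst v p * gauss x m (v / p) := by
  have h2πv : 0 < 2 * π * v := by positivity
  have hbase : (2 * π * (v / p)) ^ (-(1:ℝ)/2) = (2 * π * v) ^ (-(1:ℝ)/2) * p ^ ((1:ℝ)/2) := by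
    rw [mul_div_assoc', div_rpow h2πv.le hp.le, neg_div, rpow_neg hp.le, div_inv_eq_mul]
  have hpow : (2 * π * v) ^ (-(1:ℝ)/2 * p)
      = (2 * π * v) ^ ((1 - p) / 2) * (2 * π * v) ^ (-(1:ℝ)/2) := by
    rw [← rpow_add h2πv]; ring_nf
  have hp_cancel : p ^ (-(1:ℝ)/2) * p ^ ((1:ℝ)/2) = 1 := by
    rw [← rpow_add hp]; norm_num
  have hexp : -(x - m) ^ 2 / (2 * v) * p = -(x - m) ^ 2 / (2 * (v / p)) := by
    field_simp
  simp only [gauss, gaussRpowConst]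
  rw [mul_rpow (rpow_nonneg h2πv.le _) (exp_nonneg _), ← rpow_mul h2πv.le, ← exp_mul, hbase, hpow,
    hexp]
  linear_combination (-(2 * π * v) ^ ((1 - p) / 2) * (2 * π * v) ^ (-(1:ℝ)/2)
    * rexp (-(x - m) ^ 2 / (2 * (v / p)))) * hp_cancel

lemma integrable_prod_gauss_mul {n : ℕ} {μ a : Fin n → ℝ} (ha : ∀ k, 0 < a k)
    {g : (Fin n → ℝ) → ℝ} (hg : AEStronglyMeasurable g) {C : ℝ} (hC : ∀ x, ‖g x‖ ≤ C) :
    Integrable fun x : Fin n → ℝ => (∏ k, gauss (x k) (μ k) (a k)) * g x :=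
  (Integrable.fintype_prod fun k => integrable_gauss (ha k) (μ k)).mul_bdd hg (.of_forall hC)

theorem integral_prod_gauss_mul_gauss_sub_sum {n : ℕ} {μ a : Fin n → ℝ} (ha : ∀ k, 0 < a k)
    (β : Fin n → ℝ) (m : ℝ) {w : ℝ} (hw : 0 < w) (z : ℝ) :
    ∫ x : Fin n → ℝ, (∏ k, gauss (x k) (μ k) (a k)) * gauss (z - ∑ k, x k * β k) m w
      = gauss z (m + ∑ k, μ k * β k) (w + ∑ k, a k * β k ^ 2) := by
  induction n generalizing m w z with
  | zero => simp [Measure.real, volume_pi]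
  | succ n ih =>
    have hF := integrable_prod_gauss_mul ha (μ := μ) (g := fun x => gauss (z - ∑ k, x k * β k) m w)
      ((continuous_gauss m w).comp (by fun_prop)).aestronglyMeasurable
      (fun x => by rw [norm_of_nonneg (gauss_nonneg hw _ _)]; exact gauss_le hw _ _)
    have e := (volume_preserving_piFinSuccAbove (fun _ : Fin (n + 1) => ℝ) 0).symm
    rw [← e.integral_comp', Measure.volume_eq_prod]
    refine (integral_prod _
      ((e.integrable_comp_emb (MeasurableEquiv.measurableEmbedding _)).2 hF)).trans ?_
    simp only [MeasurableEquiv.piFinSuccAbove_symm_apply, Fin.insertNthEquiv_zero,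
      Function.comp_apply, Fin.consEquiv_apply, Fin.prod_univ_succ, Fin.sum_univ_succ,
      Fin.cons_zero, Fin.cons_succ]
    have hw' : 0 < w + ∑ k : Fin n, a k.succ * β k.succ ^ 2 :=
      add_pos_of_pos_of_nonneg hw (Finset.sum_nonneg fun k _ => mul_nonneg (ha _).le (sq_nonneg _))
    have h_section : ∀ x₀ : ℝ, ∫ xs : Fin n → ℝ,
        (gauss x₀ (μ 0) (a 0) * ∏ k, gauss (xs k) (μ k.succ) (a k.succ)) *
          gauss (z - (x₀ * β 0 + ∑ k, xs k * β k.succ)) m w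
        = gauss x₀ (μ 0) (a 0) * gauss (z - β 0 * x₀) (m + ∑ k : Fin n, μ k.succ * β k.succ)
            (w + ∑ k : Fin n, a k.succ * β k.succ ^ 2) := by
      intro x₀
      simp_rw [mul_assoc, ← sub_sub, mul_comm x₀]
      rw [integral_const_mul, ih (fun k => ha k.succ) _ _ hw]
    simp_rw [h_section]
    rw [integral_gauss_mul_gauss_sub (ha 0) hw']
    congr 1 <;> ring

lemma gaussRpowConst_rpow_mul_gaussRpowConst {v q B : ℝ} (hv : 0 < v) (hq : 0 < q) (hB : 0 ≤ B) :
    gaussRpowConst v (1 / q) ^ q * gaussRpowConst (v * q + B) q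
      = (1 + B / (v * q)) ^ ((1 - q) / 2) := by
  have hW : 0 < v * q + B := by positivity
  rw [show 1 + B / (v * q) = (v * q + B) / (v * q) by field_simp]
  refine log_injOn_pos (Set.mem_Ioi.2 (by unfold gaussRpowConst; positivity))
    (Set.mem_Ioi.2 (by positivity)) ?_
  simp (disch := positivity) only [gaussRpowConst, log_mul, log_rpow, log_div, log_one]
  field_simp
  ring

theorem integral_gallager_gauss {n₁ n₂ : ℕ} {μ₁ a₁ β₁ : Fin n₁ → ℝ} {μ₂ a₂ β₂ : Fin n₂ → ℝ}
    (ha₁ : ∀ k, 0 < a₁ k) (ha₂ : ∀ k, 0 < a₂ k) (m : ℝ) {v q : ℝ} (hv : 0 < v) (hq : 0 < q) :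
    ∫ y, ∫ x₂ : Fin n₂ → ℝ, (∏ k, gauss (x₂ k) (μ₂ k) (a₂ k)) *
        (∫ x₁ : Fin n₁ → ℝ, (∏ k, gauss (x₁ k) (μ₁ k) (a₁ k)) *
          gauss (y - ∑ k, x₁ k * β₁ k - ∑ k, x₂ k * β₂ k) m v ^ (1 / q)) ^ q
      = (1 + (∑ k, a₁ k * β₁ k ^ 2) / (v * q)) ^ ((1 - q) / 2) := by
  set B := ∑ k, a₁ k * β₁ k ^ 2
  have hB : 0 ≤ B := Finset.sum_nonneg fun k _ => mul_nonneg (ha₁ k).le (sq_nonneg _)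
  have hW : 0 < v * q + B := by positivity
  have hWq : 0 < (v * q + B) / q + ∑ k, a₂ k * β₂ k ^ 2 :=
    add_pos_of_pos_of_nonneg (by positivity)
      (Finset.sum_nonneg fun k _ => mul_nonneg (ha₂ k).le (sq_nonneg _))
  have h_inner : ∀ y (x₂ : Fin n₂ → ℝ),
      ∫ x₁ : Fin n₁ → ℝ, (∏ k, gauss (x₁ k) (μ₁ k) (a₁ k)) *
          gauss (y - ∑ k, x₁ k * β₁ k - ∑ k, x₂ k * β₂ k) m v ^ (1 / q)
        = gaussRpowConst v (1 / q) *
            gauss (y - ∑ k, x₂ k * β₂ k) (m + ∑ k, μ₁ k * β₁ k) (v * q + B) := by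
    intro y x₂
    calc _ = ∫ x₁ : Fin n₁ → ℝ, gaussRpowConst v (1 / q) * ((∏ k, gauss (x₁ k) (μ₁ k) (a₁ k)) *
              gauss (y - ∑ k, x₂ k * β₂ k - ∑ k, x₁ k * β₁ k) m (v * q)) := by
          congr 1 with x₁
          rw [gauss_rpow hv (one_div_pos.2 hq), div_div_eq_mul_div, div_one, sub_right_comm]
          ring
      _ = _ := by
          rw [integral_const_mul, integral_prod_gauss_mul_gauss_sub_sum ha₁ β₁ m (by positivity)]
  have h_pow : ∀ z m', (gaussRpowConst v (1 / q) * gauss z m' (v * q + B)) ^ q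
      = gaussRpowConst v (1 / q) ^ q * gaussRpowConst (v * q + B) q *
          gauss z m' ((v * q + B) / q) := by
    intro z m'
    rw [mul_rpow (by unfold gaussRpowConst; positivity) (gauss_nonneg hW _ _), gauss_rpow hW hq]
    ring
  simp_rw [h_inner, h_pow, mul_left_comm _ (gaussRpowConst v (1 / q) ^ q * _), integral_const_mul,
    integral_prod_gauss_mul_gauss_sub_sum ha₂ β₂ _ (div_pos hW hq), integral_gauss_eq_one hWq,
    mul_one]
  exact gaussRpowConst_rpow_mul_gaussRpowConst hv hq hB

theorem statement8_general (ρ SNR δ : ℝ) (hρ : ρ ∈ Set.Ioo (0:ℝ) 1) (hSNR : 0 < SNR)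
    (hδ : δ ∈ Set.Icc (0:ℝ) 1) (N K i : ℕ) (hN : 1 ≤ N)
    (A : ℝ) (hA : A = (1-ρ)/N)
    (β₁ : Fin i → ℝ) (β₂ : Fin (K - i) → ℝ) :
    (∫ μ : ℝ, gauss μ 0 (ρ/N) * ∫ y : ℝ, ∫ x₂ : Fin (K - i) → ℝ,
        (∏ k, gauss (x₂ k) μ A) *
          (∫ x₁ : Fin i → ℝ, (∏ k, gauss (x₁ k) μ A) *
            gauss (y - (∑ k, x₁ k * β₁ k) - (∑ k, x₂ k * β₂ k)) 0 (1/SNR) ^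
              ((1:ℝ)/(1+δ))) ^ (1+δ)) =
    (1 + (1-ρ) * SNR * (∑ k, β₁ k ^ 2) / (N * (1+δ))) ^ (-δ/2) := by
  obtain ⟨hρ0, hρ1⟩ := hρ
  have hN0 : (0:ℝ) < N := by exact_mod_cast hN
  have hA0 : 0 < A := hA ▸ div_pos (sub_pos.2 hρ1) hN0
  have hq : 0 < 1 + δ := by linarith [hδ.1]
  simp_rw [integral_gallager_gauss (μ₁ := fun _ => _) (μ₂ := fun _ => _) (fun _ => hA0)
    (fun _ => hA0) 0 (one_div_pos.2 hSNR) hq]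
  rw [integral_mul_const, integral_gauss_eq_one (by positivity), one_mul, ← Finset.mul_sum, hA]
  congr 1
  · field_simp
  · ring

theorem statement8 (ρ SNR δ : ℝ) (hρ : ρ ∈ Set.Ioo (0:ℝ) 1) (hSNR : 0 < SNR)
    (hδ : δ ∈ Set.Icc (0:ℝ) 1) (N K i : ℕ) (hN : 1 ≤ N) (hK : 1 ≤ K)
    (hi1 : 1 ≤ i) (hiK : i ≤ K) (A : ℝ) (hA : A = (1-ρ)/N)
    (β₁ : Fin i → ℝ) (β₂ : Fin (K - i) → ℝ) :
    (∫ μ : ℝ, gauss μ 0 (ρ/N) * ∫ y : ℝ, ∫ x₂ : Fin (K - i) → ℝ,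
        (∏ k, gauss (x₂ k) μ A) *
          (∫ x₁ : Fin i → ℝ, (∏ k, gauss (x₁ k) μ A) *
            gauss (y - (∑ k, x₁ k * β₁ k) - (∑ k, x₂ k * β₂ k)) 0 (1/SNR) ^
              ((1:ℝ)/(1+δ))) ^ (1+δ)) =
    (1 + (1-ρ) * SNR * (∑ k, β₁ k ^ 2) / (N * (1+δ))) ^ (-δ/2) :=
  statement8_general ρ SNR δ hρ hSNR hδ N K i hN A hA β₁ β₂
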